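/- arXiv:math/0611651 — 4 statements merged into one kernel-verified Lean document; each statement's English description precedes it below -/
import Mathlib

section
/- The number of walks of length n in the quarter plane with step set {N, SE, W} = {(0,1), (1,-1), (-1,0)} starting at the origin equals the n-th Motzkin number, i.e. the counting generating function is W(t) = (1 - t - √((1+t)(1-3t)))/(2t²). -/
/-!
Weight a walk ending at `(x, y)` by the number of lattice points of the box `[0, x] × [0, y]`
on the antidiagonal `a + b = h`. One more step `N`, `SE` or `W` turns the total weight at
height `h` into the sum of the weights at heights `h - 1`, `h` and `h + 1`, so these weighted
counts evolve like Motzkin paths sorted by final height. Every box meets the antidiagonal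
`a + b = 0` exactly once, so the walks of length `n` are equinumerous with Motzkin paths of
length `n`. On generating functions, if `F = 1 + tF + t²F²` then height `h` contributes
`t^h F^(h+1)`, and solving the quadratic for `F` gives the square-root formula.
-/

open Finset

/-- The partial sum of the first `k` steps of a walk. -/
def psum {n : ℕ} (w : Fin n → ℤ × ℤ) (k : ℕ) : ℤ × ℤ :=
  ∑ i ∈ Finset.univ.filter (fun i : Fin n => (i : ℕ) < k), w i

/-- A quarter-plane walk: all steps lie in `Y` and every partial sum has
nonnegative coordinates. -/
def IsQWalk (Y : Finset (ℤ × ℤ)) {n : ℕ} (w : Fin n → ℤ × ℤ) : Prop :=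
  (∀ i, w i ∈ Y) ∧ ∀ k, 0 ≤ (psum w k).1 ∧ 0 ≤ (psum w k).2

/-- The number of quarter-plane walks of length `n` with steps from `Y`. -/
noncomputable def walkCount (Y : Finset (ℤ × ℤ)) (n : ℕ) : ℕ :=
  Nat.card {w : Fin n → ℤ × ℤ // IsQWalk Y w}

section QuarterPlaneWalks

variable {Y : Finset (ℤ × ℤ)} {n : ℕ}

lemma psum_snoc (v : Fin n → ℤ × ℤ) (s : ℤ × ℤ) (k : ℕ) :
    psum (Fin.snoc v s : Fin (n + 1) → ℤ × ℤ) k = psum v k + if n < k then s else 0 := by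
  simp only [psum, Finset.sum_filter, Fin.sum_univ_castSucc, Fin.snoc_castSucc,
    Fin.val_castSucc, Fin.val_last, Fin.snoc_last]

lemma psum_of_le (v : Fin n → ℤ × ℤ) {k : ℕ} (hk : n ≤ k) : psum v k = psum v n := by
  simp only [psum, Finset.sum_filter]
  exact Finset.sum_congr rfl fun i _ => by simp [i.isLt, i.isLt.trans_le hk]

lemma psum_snoc_self (v : Fin n → ℤ × ℤ) (s : ℤ × ℤ) :
    psum (Fin.snoc v s : Fin (n + 1) → ℤ × ℤ) (n + 1) = psum v n + s := by
  simp [psum_snoc, psum_of_le v n.le_succ]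

lemma isQWalk_iff (w : Fin n → ℤ × ℤ) :
    IsQWalk Y w ↔ (∀ i, w i ∈ Y) ∧ ∀ k, 0 ≤ psum w k := by
  simp [IsQWalk, Prod.le_def]

lemma isQWalk_snoc_iff (v : Fin n → ℤ × ℤ) (s : ℤ × ℤ) :
    IsQWalk Y (Fin.snoc v s : Fin (n + 1) → ℤ × ℤ) ↔
      IsQWalk Y v ∧ s ∈ Y ∧ 0 ≤ psum v n + s := by
  simp only [isQWalk_iff, Fin.forall_fin_succ', Fin.snoc_castSucc, Fin.snoc_last, psum_snoc]
  constructor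
  · rintro ⟨⟨hv, hs⟩, hpos⟩
    refine ⟨⟨hv, fun k => ?_⟩, hs, by simpa [psum_of_le v n.le_succ] using hpos (n + 1)⟩
    rcases le_or_gt k n with hk | hk
    · simpa [hk.not_gt] using hpos k
    · simpa [psum_of_le v hk.le] using hpos n
  · rintro ⟨⟨hv, hpsum⟩, hs, hend⟩
    refine ⟨⟨hv, hs⟩, fun k => ?_⟩
    split_ifs with hk
    · rwa [psum_of_le v hk.le]
    · simpa using hpsum k

open Classical in
noncomputable def qWalks (Y : Finset (ℤ × ℤ)) (n : ℕ) : Finset (Fin n → ℤ × ℤ) :=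
  (Fintype.piFinset fun _ => Y).filter (IsQWalk Y)

lemma mem_qWalks {w : Fin n → ℤ × ℤ} : w ∈ qWalks Y n ↔ IsQWalk Y w := by
  simp only [qWalks, Finset.mem_filter, Fintype.mem_piFinset, and_iff_right_iff_imp]
  exact fun hw => hw.1

lemma walkCount_eq_card (Y : Finset (ℤ × ℤ)) (n : ℕ) : walkCount Y n = #(qWalks Y n) := by
  rw [walkCount, Nat.card_congr (Equiv.subtypeEquivRight fun _ => mem_qWalks.symm),
    Nat.card_eq_fintype_card, Fintype.card_coe]

lemma zero_le_psum_of_mem_qWalks {w : Fin n → ℤ × ℤ} (hw : w ∈ qWalks Y n) (k : ℕ) :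
    0 ≤ psum w k :=
  ((isQWalk_iff w).1 (mem_qWalks.1 hw)).2 k

variable {R : Type*} [AddCommMonoid R]

lemma sum_qWalks_zero (f : ℤ × ℤ → R) : ∑ w ∈ qWalks Y 0, f (psum w 0) = f 0 := by
  have : qWalks Y 0 = {Fin.elim0} := by
    ext w
    simp only [mem_qWalks, Finset.mem_singleton, Subsingleton.elim w Fin.elim0, iff_true]
    simp [IsQWalk, psum]
  simp [this, psum]

lemma sum_qWalks_succ (f : ℤ × ℤ → R) (hf : ∀ e, ¬ 0 ≤ e → f e = 0) :
    ∑ w ∈ qWalks Y (n + 1), f (psum w (n + 1)) =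
      ∑ v ∈ qWalks Y n, ∑ s ∈ Y, f (psum v n + s) := by
  rw [← Finset.sum_product']
  symm
  refine Finset.sum_bij_ne_zero (fun p _ _ => Fin.snoc p.1 p.2) ?_ ?_ ?_ ?_
  · rintro ⟨v, s⟩ hvs hf0
    rw [Finset.mem_product, mem_qWalks] at hvs
    exact mem_qWalks.2 ((isQWalk_snoc_iff v s).2
      ⟨hvs.1, hvs.2, not_not.1 (mt (hf _) hf0)⟩)
  · rintro ⟨v, s⟩ - - ⟨v', s'⟩ - - h
    obtain ⟨rfl, rfl⟩ := Fin.snoc_injective2 h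
    rfl
  · intro w hw _
    rw [mem_qWalks, ← Fin.snoc_init_self w, isQWalk_snoc_iff] at hw
    refine ⟨(Fin.init w, w (Fin.last n)), ?_, ?_, Fin.snoc_init_self w⟩
    · exact Finset.mem_product.2 ⟨mem_qWalks.2 hw.1, hw.2.1⟩
    · rwa [← psum_snoc_self, Fin.snoc_init_self]
  · rintro ⟨v, s⟩ - -
    rw [psum_snoc_self]

end QuarterPlaneWalks

namespace MotzkinNSEW

abbrev NSEW : Finset (ℤ × ℤ) := {((0:ℤ),(1:ℤ)), (1,-1), (-1,0)}

lemma sum_NSEW {R : Type*} [AddCommMonoid R] (f : ℤ × ℤ → R) :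
    ∑ s ∈ NSEW, f s = f (0, 1) + f (1, -1) + f (-1, 0) := by
  rw [Finset.sum_insert (by decide), Finset.sum_insert (by decide), Finset.sum_singleton,
    add_assoc]

/-- The number of `(a, b) ∈ ℕ²` with `a + b = h`, `a ≤ e.1` and `b ≤ e.2`. -/
def boxDiagCount (h : ℕ) (e : ℤ × ℤ) : ℕ :=
  (min (h : ℤ) e.2 - max 0 ((h : ℤ) - e.1) + 1).toNat

lemma boxDiagCount_eq_zero {e : ℤ × ℤ} (he : ¬ 0 ≤ e) (h : ℕ) : boxDiagCount h e = 0 := by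
  rw [Prod.le_def] at he
  simp only [boxDiagCount, Prod.fst_zero, Prod.snd_zero] at he ⊢
  omega

lemma boxDiagCount_zero {e : ℤ × ℤ} (he : 0 ≤ e) : boxDiagCount 0 e = 1 := by
  rw [Prod.le_def] at he
  simp only [boxDiagCount, Prod.fst_zero, Prod.snd_zero] at he ⊢
  omega

lemma boxDiagCount_origin (h : ℕ) : boxDiagCount h 0 = if h = 0 then 1 else 0 := by
  simp only [boxDiagCount, Prod.fst_zero, Prod.snd_zero]
  split_ifs <;> omega

lemma sum_NSEW_boxDiagCount_zero {e : ℤ × ℤ} (he : 0 ≤ e) :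
    ∑ s ∈ NSEW, boxDiagCount 0 (e + s) = boxDiagCount 0 e + boxDiagCount 1 e := by
  rw [Prod.le_def] at he
  simp only [sum_NSEW, boxDiagCount, Prod.fst_add, Prod.snd_add, Prod.fst_zero,
    Prod.snd_zero] at he ⊢
  omega

lemma sum_NSEW_boxDiagCount_succ {e : ℤ × ℤ} (he : 0 ≤ e) (h : ℕ) :
    ∑ s ∈ NSEW, boxDiagCount (h + 1) (e + s) =
      boxDiagCount h e + boxDiagCount (h + 1) e + boxDiagCount (h + 2) e := by
  obtain ⟨x, y⟩ := e
  obtain ⟨hx, hy⟩ : 0 ≤ x ∧ 0 ≤ y := Prod.le_def.1 he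
  simp only [sum_NSEW, Prod.mk_add_mk, add_zero, ← sub_eq_add_neg]
  -- Each shifted count differs from an unshifted one by a boundary term; these terms cancel.
  have hN : boxDiagCount (h + 1) (x, y + 1) =
      boxDiagCount h (x, y) + if (h : ℤ) + 1 ≤ x then 1 else 0 := by
    simp only [boxDiagCount]; push_cast; split_ifs <;> omega
  have hW : boxDiagCount (h + 1) (x - 1, y) + (if (h : ℤ) + 2 ≤ y then 1 else 0) =
      boxDiagCount (h + 2) (x, y) := by
    simp only [boxDiagCount]; push_cast; split_ifs <;> omega
  have hSE : boxDiagCount (h + 1) (x + 1, y - 1) +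
        (if y - 1 ≤ (h : ℤ) ∧ (h : ℤ) ≤ x + y - 1 then 1 else 0) =
      boxDiagCount (h + 1) (x, y) + if x ≤ (h : ℤ) ∧ (h : ℤ) ≤ x + y - 1 then 1 else 0 := by
    simp only [boxDiagCount]; push_cast; split_ifs <;> omega
  split_ifs at hN hW hSE <;> omega

noncomputable def heightCount (n h : ℕ) : ℕ :=
  ∑ w ∈ qWalks NSEW n, boxDiagCount h (psum w n)

lemma walkCount_eq_heightCount (n : ℕ) : walkCount NSEW n = heightCount n 0 := by
  rw [walkCount_eq_card, heightCount, Finset.card_eq_sum_ones]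
  exact Finset.sum_congr rfl fun w hw =>
    (boxDiagCount_zero (zero_le_psum_of_mem_qWalks hw n)).symm

lemma heightCount_zero (h : ℕ) : heightCount 0 h = if h = 0 then 1 else 0 := by
  rw [heightCount, sum_qWalks_zero, boxDiagCount_origin]

lemma heightCount_succ_eq_sum (n h : ℕ) :
    heightCount (n + 1) h =
      ∑ w ∈ qWalks NSEW n, ∑ s ∈ NSEW, boxDiagCount h (psum w n + s) :=
  sum_qWalks_succ _ fun _ he => boxDiagCount_eq_zero he h

lemma heightCount_succ_zero (n : ℕ) :
    heightCount (n + 1) 0 = heightCount n 0 + heightCount n 1 := by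
  rw [heightCount_succ_eq_sum, heightCount, heightCount, ← Finset.sum_add_distrib]
  exact Finset.sum_congr rfl fun w hw =>
    sum_NSEW_boxDiagCount_zero (zero_le_psum_of_mem_qWalks hw n)

lemma heightCount_succ_succ (n h : ℕ) :
    heightCount (n + 1) (h + 1) =
      heightCount n h + heightCount n (h + 1) + heightCount n (h + 2) := by
  rw [heightCount_succ_eq_sum]
  simp only [heightCount, ← Finset.sum_add_distrib]
  exact Finset.sum_congr rfl fun w hw =>
    sum_NSEW_boxDiagCount_succ (zero_le_psum_of_mem_qWalks hw n) h

section PowerSeries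

open PowerSeries

variable {F : PowerSeries ℚ}

lemma constantCoeff_eq_one_of_motzkin_eq (hF : F = 1 + X * F + X ^ 2 * F ^ 2) :
    constantCoeff F = 1 := by
  simpa using congrArg constantCoeff hF

lemma heightCount_eq_coeff (hF : F = 1 + X * F + X ^ 2 * F ^ 2) (n h : ℕ) :
    (heightCount n h : ℚ) = coeff n (X ^ h * F ^ (h + 1)) := by
  induction n generalizing h with
  | zero =>
    rcases h with _ | h
    · simp [heightCount_zero, constantCoeff_eq_one_of_motzkin_eq hF]
    · simp [heightCount_zero, pow_succ]
  | succ n ih =>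
    rcases h with _ | h
    · have hF' : X ^ 0 * F ^ (0 + 1) = 1 + X * (X ^ 0 * F ^ (0 + 1) + X ^ 1 * F ^ (1 + 1)) := by
        rw [zero_add, pow_zero, one_mul, pow_one]
        linear_combination hF
      rw [heightCount_succ_zero, hF', map_add, coeff_one, if_neg n.succ_ne_zero,
        coeff_succ_X_mul, map_add, ← ih, ← ih]
      push_cast; ring
    · have hF' : X ^ (h + 1) * F ^ (h + 1 + 1) = X * (X ^ h * F ^ (h + 1) +
          X ^ (h + 1) * F ^ (h + 1 + 1) + X ^ (h + 2) * F ^ (h + 2 + 1)) := by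
        linear_combination X ^ (h + 1) * F ^ (h + 1) * hF
      rw [heightCount_succ_succ, hF', coeff_succ_X_mul, map_add, map_add, ← ih, ← ih, ← ih]
      push_cast; ring

lemma mk_motzkin_eq (M : ℕ → ℕ) (hM0 : M 0 = 1)
    (hMrec : ∀ n, M (n + 1) = M n + ∑ k ∈ Finset.range n, M k * M (n - 1 - k)) :
    PowerSeries.mk (fun n => (M n : ℚ)) = 1 + X * PowerSeries.mk (fun n => (M n : ℚ)) +
      X ^ 2 * PowerSeries.mk (fun n => (M n : ℚ)) ^ 2 := by
  refine PowerSeries.ext fun n => ?_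
  rcases n with _ | _ | n
  · simp [hM0]
  · simp [hMrec 0, hM0, coeff_one, coeff_X_pow_mul']
  · rw [map_add, map_add, coeff_succ_X_mul, coeff_X_pow_mul', if_pos (by omega),
      show n + 1 + 1 - 2 = n by omega, pow_two, coeff_mul,
      Finset.Nat.sum_antidiagonal_eq_sum_range_succ_mk, coeff_one, if_neg (by omega)]
    simp only [coeff_mk, hMrec (n + 1), Nat.add_sub_cancel]
    push_cast
    ring

lemma two_mul_X_sq_mul_eq_one_sub_X_sub (hF : F = 1 + X * F + X ^ 2 * F ^ 2)
    {s : PowerSeries ℚ} (hs : s ^ 2 = (1 + X) * (1 - 3 * X)) (hs0 : constantCoeff s = 1) :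
    2 * X ^ 2 * F = 1 - X - s := by
  have hsq : s ^ 2 = (1 - X - 2 * X ^ 2 * F) ^ 2 := by
    linear_combination hs + 4 * X ^ 2 * hF
  rcases sq_eq_sq_iff_eq_or_eq_neg.1 hsq with h | h
  · rw [h]; ring
  · have := congrArg constantCoeff h
    norm_num [hs0] at this

end PowerSeries

end MotzkinNSEW

/-- For the step set `{N, SE, W} = {(0,1),(1,-1),(-1,0)}`, the number
of quarter-plane walks of length `n` equals the `n`-th Motzkin number `M n`
(characterized by `M 0 = 1` and `M (n+1) = M n + ∑_{k=0}^{n-1} M k * M (n-1-k)`);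
equivalently the counting generating function `W(t) = ∑ walkCount n · tⁿ`
satisfies `2t²·W(t) = 1 - t - √((1+t)(1-3t))`, where the square root is the
power series `s` with `s² = (1+t)(1-3t)` and constant term `1`. -/
theorem motzkin_count_NSEW
    (M : ℕ → ℕ) (hM0 : M 0 = 1)
    (hMrec : ∀ n, M (n + 1) = M n + ∑ k ∈ Finset.range n, M k * M (n - 1 - k)) :
    (∀ n, walkCount {((0:ℤ),(1:ℤ)), (1,-1), (-1,0)} n = M n) ∧
    (∀ s : PowerSeries ℚ,
      s ^ 2 = (1 + PowerSeries.X) * (1 - 3 * PowerSeries.X) →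
      PowerSeries.constantCoeff s = 1 →
      2 * PowerSeries.X ^ 2 *
          (PowerSeries.mk fun n => (walkCount {((0:ℤ),(1:ℤ)), (1,-1), (-1,0)} n : ℚ)) =
        1 - PowerSeries.X - s) := by
  have hF := MotzkinNSEW.mk_motzkin_eq M hM0 hMrec
  have hcount (n : ℕ) : walkCount MotzkinNSEW.NSEW n = M n := by
    have := MotzkinNSEW.heightCount_eq_coeff hF n 0
    rw [pow_zero, one_mul, pow_one, PowerSeries.coeff_mk,
      ← MotzkinNSEW.walkCount_eq_heightCount] at this
    exact_mod_cast this
  refine ⟨hcount, fun s hs hs0 => ?_⟩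
  simp only [hcount]
  exact MotzkinNSEW.two_mul_X_sq_mul_eq_one_sub_X_sub hF hs hs0
end

section
/- Walks in the quarter plane of length n with step set {N, SE, W} ending at (i,j) are in bijection with standard Young tableaux with n boxes, at most 3 rows, and row lengths (n_1, n_2, n_3) with n_2 - n_3 = i and n_1 - n_2 = j: place label k in the bottom (resp. middle, top) row if the k-th step is N (resp. SE, W). -/
open Finset

/-- We encode a Young tableau with `n` boxes and at most 3 rows by the function
`r : Fin n → Fin 3` assigning to each label `k` the row (0 = bottom, 1 = middle,
2 = top) containing it; labels are placed left-to-right in their rows.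
`rowCnt r m k` is the number of labels `< k` placed in row `m`. -/
def rowCnt {n : ℕ} (r : Fin n → Fin 3) (m : Fin 3) (k : ℕ) : ℕ :=
  (Finset.univ.filter (fun i : Fin n => (i : ℕ) < k ∧ r i = m)).card

/-- Such a filling is a standard Young tableau iff every prefix of labels has
weakly decreasing row counts (rows increase left-to-right by construction;
this lattice condition is exactly column-strictness and wellformedness of
the shape `n₁ ≥ n₂ ≥ n₃`). -/
def IsSYT3 {n : ℕ} (r : Fin n → Fin 3) : Prop :=
  ∀ k, rowCnt r 1 k ≤ rowCnt r 0 k ∧ rowCnt r 2 k ≤ rowCnt r 1 k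

/-- The row in which the label of the `k`-th step is placed: bottom for `N`,
middle for `SE`, top for `W`. -/
def stepRow : ℤ × ℤ → Fin 3 := fun s =>
  if s = ((0:ℤ), (1:ℤ)) then 0 else if s = (1, -1) then 1 else 2


/-- The step corresponding to each row. -/
def rowStep : Fin 3 → ℤ × ℤ := ![((0:ℤ),(1:ℤ)), (1,-1), (-1,0)]

lemma stepRow_rowStep (m : Fin 3) : stepRow (rowStep m) = m := by
  fin_cases m <;> decide

lemma rowStep_stepRow {s : ℤ × ℤ}
    (hs : s ∈ ({((0:ℤ),(1:ℤ)), (1,-1), (-1,0)} : Finset (ℤ×ℤ))) :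
    rowStep (stepRow s) = s := by
  simp only [Finset.mem_insert, Finset.mem_singleton] at hs
  rcases hs with h|h|h <;> subst h <;> decide

lemma rowStep_mem (m : Fin 3) :
    rowStep m ∈ ({((0:ℤ),(1:ℤ)), (1,-1), (-1,0)} : Finset (ℤ×ℤ)) := by
  fin_cases m <;> decide

lemma psum_eq {n : ℕ} (w : Fin n → ℤ × ℤ)
    (hw : ∀ i, w i ∈ ({((0:ℤ),(1:ℤ)), (1,-1), (-1,0)} : Finset (ℤ×ℤ))) (k : ℕ) :
    psum w k = (((rowCnt (fun i => stepRow (w i)) 1 k : ℤ) - rowCnt (fun i => stepRow (w i)) 2 k),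
                ((rowCnt (fun i => stepRow (w i)) 0 k : ℤ) - rowCnt (fun i => stepRow (w i)) 1 k)) := by
  set r : Fin n → Fin 3 := fun i => stepRow (w i) with hr
  have h1 : psum w k = ∑ i ∈ Finset.univ.filter (fun i : Fin n => (i : ℕ) < k), rowStep (r i) := by
    refine Finset.sum_congr rfl fun i _ => ?_
    exact (rowStep_stepRow (hw i)).symm
  have h2 : ∑ i ∈ Finset.univ.filter (fun i : Fin n => (i : ℕ) < k), rowStep (r i)
      = ∑ m : Fin 3, (rowCnt r m k) • rowStep m := by
    rw [← Finset.sum_fiberwise (Finset.univ.filter (fun i : Fin n => (i : ℕ) < k)) r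
      (fun i => rowStep (r i))]
    refine Finset.sum_congr rfl fun m _ => ?_
    rw [Finset.sum_congr rfl (fun i hi => ?_), Finset.sum_const, rowCnt]
    · congr 1
      rw [Finset.filter_filter]
    · simp only [Finset.mem_filter] at hi
      rw [hi.2]
  rw [h1, h2, Fin.sum_univ_three]
  ext <;> simp [rowStep, Prod.ext_iff] <;> ring

/-- Quarter-plane walks of length `n` with step set
`{N, SE, W} = {(0,1),(1,-1),(-1,0)}` ending at `(i,j)` are in bijection with standard
Young tableaux with `n` boxes, at most 3 rows, and row lengths `(n₁,n₂,n₃)` with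
`n₂ - n₃ = i` and `n₁ - n₂ = j`, via the map placing label `k` in the bottom
(resp. middle, top) row when the `k`-th step is `N` (resp. `SE`, `W`). -/
theorem walks_biject_SYT3 (n : ℕ) (i j : ℤ) :
    ∃ f : {w : Fin n → ℤ × ℤ //
            IsQWalk {((0:ℤ),(1:ℤ)), (1,-1), (-1,0)} w ∧ psum w n = (i, j)} →
          {r : Fin n → Fin 3 // IsSYT3 r ∧
            (rowCnt r 1 n : ℤ) - (rowCnt r 2 n : ℤ) = i ∧
            (rowCnt r 0 n : ℤ) - (rowCnt r 1 n : ℤ) = j},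
      Function.Bijective f ∧ ∀ w k, (f w).1 k = stepRow (w.1 k) := by
  refine ⟨fun w => ⟨fun k => stepRow (w.1 k), ?_, ?_, ?_⟩, ?_, fun w k => rfl⟩
  · -- the image is a standard Young tableau
    intro k
    obtain ⟨⟨hY, hpos⟩, _⟩ := w.2
    have h := psum_eq w.1 hY k
    have h1 := (hpos k).1
    have h2 := (hpos k).2
    rw [h] at h1 h2
    simp only at h1 h2
    constructor
    · exact_mod_cast sub_nonneg.mp h2
    · exact_mod_cast sub_nonneg.mp h1
  · obtain ⟨⟨hY, _⟩, hend⟩ := w.2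
    have h := psum_eq w.1 hY n
    rw [hend] at h
    exact (Prod.mk.injEq _ _ _ _).mp h.symm |>.1
  · obtain ⟨⟨hY, _⟩, hend⟩ := w.2
    have h := psum_eq w.1 hY n
    rw [hend] at h
    exact (Prod.mk.injEq _ _ _ _).mp h.symm |>.2
  · rw [Function.bijective_iff_has_inverse]
    refine ⟨fun r => ⟨fun k => rowStep (r.1 k), ?_, ?_⟩, ?_, ?_⟩
    · -- the inverse produces a quarter-plane walk
      obtain ⟨hsyt, h1, h2⟩ := r.2
      have hY : ∀ k : Fin n, rowStep (r.1 k) ∈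
          ({((0:ℤ),(1:ℤ)), (1,-1), (-1,0)} : Finset (ℤ×ℤ)) := fun k => rowStep_mem _
      refine ⟨hY, fun k => ?_⟩
      have h := psum_eq (fun k => rowStep (r.1 k)) hY k
      have hrc : (fun i => stepRow (rowStep (r.1 i))) = r.1 := by
        funext i; exact stepRow_rowStep _
      rw [hrc] at h
      rw [h]
      constructor
      · simp only
        have := (hsyt k).2
        omega
      · simp only
        have := (hsyt k).1
        omega
    · obtain ⟨hsyt, h1, h2⟩ := r.2
      have hY : ∀ k : Fin n, rowStep (r.1 k) ∈
          ({((0:ℤ),(1:ℤ)), (1,-1), (-1,0)} : Finset (ℤ×ℤ)) := fun k => rowStep_mem _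
      have h := psum_eq (fun k => rowStep (r.1 k)) hY n
      have hrc : (fun i => stepRow (rowStep (r.1 i))) = r.1 := by
        funext i; exact stepRow_rowStep _
      rw [hrc] at h
      rw [h, h1, h2]
    · intro w
      apply Subtype.ext
      funext k
      exact rowStep_stepRow (w.2.1.1 k)
    · intro r
      apply Subtype.ext
      funext k
      exact stepRow_rowStep _
end

section
/- The complete generating function for quarter-plane walks with step set {NE, SW, N} = {(1,1),(-1,-1),(0,1)} is algebraic; explicitly, Q(x,y;t) = -( -1 + yt + √(1 - 2yt + t²y² - 4t²) ) / ( t·(2t - yx + y²xt + yx·√(1 - 2yt + t²y² - 4t²)) ). -/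
open Finset PowerSeries

/-- The number of quarter-plane walks of length `n` ending at `p`. -/
noncomputable def walkCountEnd (Y : Finset (ℤ × ℤ)) (n : ℕ) (p : ℤ × ℤ) : ℕ :=
  Nat.card {w : Fin n → ℤ × ℤ // IsQWalk Y w ∧ psum w n = p}

/-- The ring `ℚ[x, 1/x, y, 1/y]` of Laurent polynomials in two variables. -/
abbrev R2 := AddMonoidAlgebra ℚ (ℤ × ℤ)

/-- The monomial `x^i y^j`. -/
noncomputable def mono (p : ℤ × ℤ) : R2 := AddMonoidAlgebra.single p 1

/-- The complete generating function `Q(x,y;t) = ∑_{i,j,n} q(i,j,n) x^i y^j t^n`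
of quarter-plane walks with steps from `Y`, an element of `R2⟦t⟧`. -/
noncomputable def Qgf (Y : Finset (ℤ × ℤ)) : PowerSeries R2 :=
  PowerSeries.mk fun n =>
    ∑ p ∈ Finset.Icc (0:ℤ) (n:ℤ) ×ˢ Finset.Icc (0:ℤ) (n:ℤ),
      AddMonoidAlgebra.single p ((walkCountEnd Y n p : ℚ))

/-!
A step `s` of `{NE, SW, N}` has `s.1 ≤ s.2`, so a walk stays in the quadrant as soon as its
abscissa stays nonnegative. Removing the last step gives the kernel equation
`Q = 1 + t (xy + y + x̄ȳ) Q - t x̄ȳ E`, where `E` counts the walks ending on the axis `i = 0`;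
cutting a walk at its last visit to that axis, which must be followed by a NE step, gives
`Q = E + t xy E Q`. Eliminating `E` leaves a quadratic equation for `Q`, and the sign of the
square root is fixed by comparing constant terms.
-/
namespace QuarterWalk

noncomputable section General

variable (Y : Finset (ℤ × ℤ))

def IsWalk (l : List (ℤ × ℤ)) : Prop :=
  (∀ s ∈ l, s ∈ Y) ∧ ∀ k, 0 ≤ (l.take k).sum

def walks : ℕ → Finset (List (ℤ × ℤ))
  | 0 => {[]}
  | n + 1 => {q ∈ walks n ×ˢ Y | 0 ≤ q.1.sum + q.2}.image fun q => q.1 ++ [q.2]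

def walkPoly (n : ℕ) : R2 := ∑ l ∈ walks Y n, mono l.sum

def axisWalkPoly (n : ℕ) : R2 := ∑ l ∈ walks Y n with l.sum.1 = 0, mono l.sum

def axisGF : R2⟦X⟧ := PowerSeries.mk (axisWalkPoly Y)

variable {Y}

lemma mono_add (p q : ℤ × ℤ) : mono (p + q) = mono p * mono q := by
  simp [mono, AddMonoidAlgebra.single_mul_single]

lemma mono_zero : mono 0 = 1 := rfl

lemma isWalk_nil : IsWalk Y [] := by simp [IsWalk]

lemma IsWalk.take {l : List (ℤ × ℤ)} (h : IsWalk Y l) (m : ℕ) : IsWalk Y (l.take m) :=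
  ⟨fun s hs => h.1 s (List.mem_of_mem_take hs), fun k => by rw [List.take_take]; exact h.2 _⟩

lemma IsWalk.sum_nonneg {l : List (ℤ × ℤ)} (h : IsWalk Y l) : 0 ≤ l.sum := by
  simpa using h.2 l.length

lemma isWalk_concat {l : List (ℤ × ℤ)} {s : ℤ × ℤ} :
    IsWalk Y (l ++ [s]) ↔ IsWalk Y l ∧ s ∈ Y ∧ 0 ≤ l.sum + s := by
  refine ⟨fun h => ⟨?_, h.1 s (by simp), by simpa using h.sum_nonneg⟩, fun ⟨hl, hs, hsum⟩ => ?_⟩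
  · simpa [List.take_append_of_le_length] using h.take l.length
  · refine ⟨fun t ht => ?_, fun k => ?_⟩
    · rcases List.mem_append.1 ht with ht | ht
      · exact hl.1 t ht
      · exact List.mem_singleton.1 ht ▸ hs
    rcases le_or_gt k l.length with hk | hk
    · simpa [List.take_append_of_le_length hk] using hl.2 k
    · rwa [List.take_of_length_le (by simpa using hk), List.sum_append, List.sum_singleton]

lemma mem_walks {n : ℕ} {l : List (ℤ × ℤ)} : l ∈ walks Y n ↔ l.length = n ∧ IsWalk Y l := by
  induction n generalizing l with
  | zero => simpa [walks, List.length_eq_zero_iff] using fun h => h ▸ isWalk_nil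
  | succ n ih =>
    rcases l.eq_nil_or_concat with rfl | ⟨l, s, rfl⟩
    · simp [walks]
    · simp [walks, ih, isWalk_concat, and_assoc]

lemma isQWalk_iff_isWalk_ofFn {n : ℕ} (w : Fin n → ℤ × ℤ) :
    IsQWalk Y w ↔ IsWalk Y (List.ofFn w) := by
  simp [IsQWalk, IsWalk, psum, List.sum_take_ofFn, List.mem_ofFn, Prod.le_def]

lemma walkCountEnd_eq_card (n : ℕ) (p : ℤ × ℤ) :
    walkCountEnd Y n p = #{l ∈ walks Y n | l.sum = p} := by
  rw [walkCountEnd, ← Nat.card_eq_finsetCard]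
  refine Nat.card_congr <| ((Equiv.vectorEquivFin _ n).symm.subtypeEquiv fun w => ?_).trans <|
    (Equiv.subtypeSubtypeEquivSubtypeInter _ (fun l => IsWalk Y l ∧ l.sum = p)).trans <|
      Equiv.subtypeEquivRight fun l => ?_
  · rw [isQWalk_iff_isWalk_ofFn, psum, ← List.sum_take_ofFn, List.take_of_length_le (by simp)]
    exact (congrArg (fun l => IsWalk Y l ∧ l.sum = p) (List.Vector.toList_ofFn w)).to_iff.symm
  · simp [mem_walks, and_assoc]

lemma walkPoly_zero : walkPoly Y 0 = 1 := by simp [walkPoly, walks, mono_zero]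

lemma axisWalkPoly_zero : axisWalkPoly Y 0 = 1 := by
  simp [axisWalkPoly, walks, filter_singleton, mono_zero]

lemma fst_sum_le_snd_sum {l : List (ℤ × ℤ)} (h : ∀ s ∈ l, s.1 ≤ s.2) : l.sum.1 ≤ l.sum.2 := by
  induction l with
  | nil => simp
  | cons a l ih =>
    simp only [List.forall_mem_cons] at h
    simp only [List.sum_cons, Prod.fst_add, Prod.snd_add]
    linarith [ih h.2, h.1]

lemma isWalk_iff_fst (hY : ∀ s ∈ Y, s.1 ≤ s.2) {l : List (ℤ × ℤ)} :
    IsWalk Y l ↔ (∀ s ∈ l, s ∈ Y) ∧ ∀ k, 0 ≤ (l.take k).sum.1 := by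
  refine and_congr_right fun hl => forall_congr' fun k => ⟨fun h => h.1, fun h => ⟨h, ?_⟩⟩
  exact h.trans <| fst_sum_le_snd_sum fun s hs => hY s <| hl s <| List.mem_of_mem_take hs

lemma coeff_Qgf (hY : ∀ s ∈ Y, s ≤ (1, 1)) (n : ℕ) : coeff n (Qgf Y) = walkPoly Y n := by
  rw [Qgf, coeff_mk, walkPoly, ← sum_fiberwise_of_maps_to (g := List.sum) fun l hl => ?_]
  · refine sum_congr rfl fun p _ => ?_
    rw [sum_congr rfl fun l hl => by rw [(mem_filter.1 hl).2], sum_const, walkCountEnd_eq_card,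
      mono, AddMonoidAlgebra.smul_single, nsmul_one]
  · obtain ⟨rfl, hw⟩ := mem_walks.1 hl
    have hle := l.sum_le_card_nsmul (1, 1) fun s hs => hY s (hw.1 s hs)
    have h0 := hw.sum_nonneg
    simp only [Prod.le_def, Prod.smul_fst, Prod.smul_snd, nsmul_one, Prod.fst_zero,
      Prod.snd_zero] at hle h0
    simp only [mem_product, mem_Icc]
    omega

lemma sum_walks_succ {M : Type*} [AddCommMonoid M] (f : List (ℤ × ℤ) → M) (n : ℕ) :
    ∑ l ∈ walks Y (n + 1), f l = ∑ l ∈ walks Y n, ∑ s ∈ Y with 0 ≤ l.sum + s, f (l ++ [s]) := by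
  rw [walks, sum_image fun q _ r _ h => ?_, sum_filter, sum_product]
  · simp_rw [sum_filter]
  · obtain ⟨h1, h2⟩ := List.append_inj' h rfl
    exact Prod.ext h1 (List.singleton_inj.1 h2)

end General

noncomputable section NeSwN

abbrev neSwN : Finset (ℤ × ℤ) := {(1, 1), (-1, -1), (0, 1)}

lemma fst_le_snd_of_mem_neSwN : ∀ s ∈ neSwN, s.1 ≤ s.2 := by decide

lemma sum_steps_neSwN_of_isWalk {l : List (ℤ × ℤ)} (hl : IsWalk neSwN l) :
    ∑ s ∈ neSwN with 0 ≤ l.sum + s, mono (l.sum + s) =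
      mono l.sum * (mono (1, 1) + mono (0, 1) + if l.sum.1 = 0 then 0 else mono (-1, -1)) := by
  have h0 := hl.sum_nonneg
  have hle := fst_sum_le_snd_sum fun s hs => fst_le_snd_of_mem_neSwN s (hl.1 s hs)
  simp only [Prod.le_def, Prod.fst_zero, Prod.snd_zero] at h0
  have hNE : 0 ≤ l.sum + (1, 1) := ⟨by dsimp; omega, by dsimp; omega⟩
  have hN : 0 ≤ l.sum + (0, 1) := ⟨by dsimp; omega, by dsimp; omega⟩
  have hSW : 0 ≤ l.sum + (-1, -1) ↔ l.sum.1 ≠ 0 := ⟨fun h => by have := h.1; dsimp at this; omega,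
    fun h => ⟨by dsimp; omega, by dsimp; omega⟩⟩
  rw [sum_filter, neSwN, sum_insert (by decide), sum_insert (by decide), sum_singleton,
    if_pos hNE, if_pos hN]
  by_cases h : l.sum.1 = 0
  · simp only [h, if_true, if_neg (mt hSW.1 (not_not.2 h)), mono_add]
    ring
  · simp only [h, if_false, if_pos (hSW.2 h), mono_add]
    ring

lemma walkPoly_neSwN_succ (n : ℕ) :
    walkPoly neSwN (n + 1) = (mono (1, 1) + mono (0, 1) + mono (-1, -1)) * walkPoly neSwN n
      - mono (-1, -1) * axisWalkPoly neSwN n := by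
  simp only [walkPoly, axisWalkPoly, sum_walks_succ, List.sum_append, List.sum_singleton]
  rw [sum_congr rfl fun l hl => sum_steps_neSwN_of_isWalk (mem_walks.1 hl).2, sum_filter, mul_sum, mul_sum,
    ← sum_sub_distrib]
  refine sum_congr rfl fun l _ => ?_
  split_ifs <;> ring

-- `l₁ ++ (1, 1) :: l₂` ("glue") is the decomposition of a walk at its last visit to the axis.
lemma take_glue_fst_pos {l₁ l₂ : List (ℤ × ℤ)} (h₁ : l₁.sum.1 = 0)
    (h₂ : ∀ k, 0 ≤ (l₂.take k).sum.1) {m : ℕ} (hm : l₁.length < m) :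
    0 < ((l₁ ++ (1, 1) :: l₂).take m).sum.1 := by
  obtain ⟨k, hk⟩ : ∃ k, m = l₁.length + (k + 1) := ⟨m - l₁.length - 1, by omega⟩
  have := h₂ k
  rw [hk, List.take_append, List.take_of_length_le (by omega), Nat.add_sub_cancel_left,
    List.take_succ_cons, List.sum_append, List.sum_cons, Prod.fst_add, Prod.fst_add, h₁]
  omega

lemma isWalk_glue {l₁ l₂ : List (ℤ × ℤ)} (h₁ : IsWalk neSwN l₁) (h₁0 : l₁.sum.1 = 0)
    (h₂ : IsWalk neSwN l₂) : IsWalk neSwN (l₁ ++ (1, 1) :: l₂) := by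
  rw [isWalk_iff_fst fst_le_snd_of_mem_neSwN] at h₁ h₂ ⊢
  refine ⟨fun s hs => ?_, fun k => ?_⟩
  · simp only [List.mem_append, List.mem_cons] at hs
    rcases hs with hs | rfl | hs
    exacts [h₁.1 s hs, by decide, h₂.1 s hs]
  · rcases le_or_gt k l₁.length with hk | hk
    · simpa [List.take_append_of_le_length hk] using h₁.2 k
    · exact (take_glue_fst_pos h₁0 h₂.2 hk).le

lemma glue_injective {l₁ l₂ l₁' l₂' : List (ℤ × ℤ)} (h₁ : l₁.sum.1 = 0) (h₁' : l₁'.sum.1 = 0)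
    (h₂ : IsWalk neSwN l₂) (h₂' : IsWalk neSwN l₂')
    (h : l₁ ++ (1, 1) :: l₂ = l₁' ++ (1, 1) :: l₂') : l₁ = l₁' ∧ l₂ = l₂' := by
  have hlen : l₁.length = l₁'.length := by
    by_contra hne
    rcases lt_or_gt_of_ne hne with hlt | hlt
    · have := take_glue_fst_pos h₁ (fun k => by simpa using (h₂.2 k).1) hlt
      rw [h, List.take_left] at this
      omega
    · have := take_glue_fst_pos h₁' (fun k => by simpa using (h₂'.2 k).1) hlt
      rw [← h, List.take_left] at this
      omega
  obtain ⟨rfl, h'⟩ := List.append_inj h hlen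
  exact ⟨rfl, List.tail_eq_of_cons_eq h'⟩

lemma exists_glue {l : List (ℤ × ℤ)} (hl : IsWalk neSwN l) (h0 : l.sum.1 ≠ 0) :
    ∃ l₁ l₂, IsWalk neSwN l₁ ∧ l₁.sum.1 = 0 ∧ IsWalk neSwN l₂ ∧ l = l₁ ++ (1, 1) :: l₂ := by
  induction l using List.reverseRecOn with
  | nil => simp at h0
  | append_singleton l s ih =>
    obtain ⟨hl, hs, hsum⟩ := isWalk_concat.1 hl
    rw [List.sum_append, List.sum_singleton] at h0
    have hx := (Prod.le_def.1 hsum).1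
    simp only [Prod.fst_add, Prod.fst_zero] at h0 hx
    by_cases hl0 : l.sum.1 = 0
    · refine ⟨l, [], hl, hl0, isWalk_nil, ?_⟩
      have : s = (1, 1) := by
        simp only [neSwN, mem_insert, mem_singleton] at hs
        rcases hs with rfl | rfl | rfl <;> simp_all
      simp [this]
    · obtain ⟨l₁, l₂, h₁, h₁0, h₂, rfl⟩ := ih hl hl0
      refine ⟨l₁, l₂ ++ [s], h₁, h₁0, isWalk_concat.2 ⟨h₂, hs, ?_⟩, by simp⟩
      have hle := fst_sum_le_snd_sum (l := l₂ ++ [s]) fun t ht =>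
        fst_le_snd_of_mem_neSwN t <| (List.mem_append.1 ht).elim (h₂.1 t) fun ht => by simp_all
      simp only [List.sum_append, List.sum_cons, List.sum_nil, add_zero, Prod.fst_add,
        Prod.snd_add, h₁0] at hle h0 hx
      rw [Prod.le_def]
      simp only [Prod.fst_add, Prod.snd_add, Prod.fst_zero, Prod.snd_zero]
      omega

lemma sum_walks_fst_ne_zero (n : ℕ) :
    ∑ l ∈ walks neSwN n with l.sum.1 ≠ 0, mono l.sum =
      ∑ k ∈ range n, axisWalkPoly neSwN k * mono (1, 1) * walkPoly neSwN (n - 1 - k) := by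
  simp only [axisWalkPoly, walkPoly, sum_mul, ← mono_add]
  simp only [mul_sum, ← mono_add, ← sum_product']
  rw [sum_sigma']
  symm
  refine sum_bij (fun q _ => q.2.1 ++ (1, 1) :: q.2.2) ?_ ?_ ?_ ?_
  · rintro ⟨k, l₁, l₂⟩ hq
    simp only [mem_sigma, mem_range, mem_product, mem_filter, mem_walks] at hq ⊢
    obtain ⟨hk, ⟨⟨rfl, h₁⟩, h₁0⟩, hlen, h₂⟩ := hq
    refine ⟨⟨by rw [List.length_append, List.length_cons]; omega, isWalk_glue h₁ h₁0 h₂⟩, ?_⟩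
    have := (Prod.le_def.1 h₂.sum_nonneg).1
    simp only [List.sum_append, List.sum_cons, Prod.fst_add, h₁0, Prod.fst_zero] at this ⊢
    omega
  · rintro ⟨k, l₁, l₂⟩ hq ⟨k', l₁', l₂'⟩ hq' h
    simp only [mem_sigma, mem_range, mem_product, mem_filter, mem_walks] at hq hq'
    obtain ⟨-, ⟨⟨rfl, -⟩, h₁0⟩, -, h₂⟩ := hq
    obtain ⟨-, ⟨⟨rfl, -⟩, h₁0'⟩, -, h₂'⟩ := hq'
    obtain ⟨rfl, rfl⟩ := glue_injective h₁0 h₁0' h₂ h₂' h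
    rfl
  · intro l hl
    simp only [mem_filter, mem_walks] at hl
    obtain ⟨⟨rfl, hw⟩, h0⟩ := hl
    obtain ⟨l₁, l₂, h₁, h₁0, h₂, rfl⟩ := exists_glue hw h0
    refine ⟨⟨l₁.length, l₁, l₂⟩, ?_, rfl⟩
    simp only [mem_sigma, mem_range, mem_product, mem_filter, mem_walks, List.length_append,
      List.length_cons]
    exact ⟨by omega, ⟨⟨trivial, h₁⟩, h₁0⟩, by omega, h₂⟩
  · rintro ⟨k, l₁, l₂⟩ -
    simp only [List.sum_append, List.sum_cons, add_assoc]

lemma walkPoly_neSwN_eq (n : ℕ) :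
    walkPoly neSwN n = axisWalkPoly neSwN n +
      ∑ k ∈ range n, axisWalkPoly neSwN k * mono (1, 1) * walkPoly neSwN (n - 1 - k) := by
  rw [← sum_walks_fst_ne_zero, axisWalkPoly, walkPoly, sum_filter_add_sum_filter_not]

lemma coeff_Qgf_neSwN (n : ℕ) : coeff n (Qgf neSwN) = walkPoly neSwN n :=
  coeff_Qgf (by decide) n

lemma Qgf_neSwN_kernel_eq :
    Qgf neSwN = 1 + X * (C (mono (1, 1) + mono (0, 1) + mono (-1, -1)) * Qgf neSwN)
      - X * (C (mono (-1, -1)) * axisGF neSwN) := by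
  refine ext fun n => ?_
  rcases n with _ | n
  · rw [coeff_Qgf_neSwN, walkPoly_zero]
    simp
  · rw [coeff_Qgf_neSwN, walkPoly_neSwN_succ, map_sub, map_add, coeff_succ_X_mul,
      coeff_succ_X_mul, coeff_C_mul, coeff_C_mul, coeff_Qgf_neSwN, axisGF, coeff_mk, coeff_one,
      if_neg n.succ_ne_zero, zero_add]

lemma Qgf_neSwN_last_visit_eq :
    Qgf neSwN = axisGF neSwN
      + X * (C (mono (1, 1)) * (axisGF neSwN * Qgf neSwN)) := by
  refine ext fun n => ?_
  rcases n with _ | n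
  · rw [coeff_Qgf_neSwN, walkPoly_zero]
    simp [axisGF, axisWalkPoly_zero]
  · rw [map_add, coeff_succ_X_mul, coeff_C_mul, coeff_mul,
      Nat.sum_antidiagonal_eq_sum_range_succ_mk, coeff_Qgf_neSwN, walkPoly_neSwN_eq, mul_sum]
    simp only [axisGF, coeff_mk, coeff_Qgf_neSwN, Nat.add_sub_cancel]
    congr 1
    exact sum_congr rfl fun k _ => by ring

local notation "𝐱" => PowerSeries.C (R := R2) (mono (1, 0))
local notation "𝐲" => PowerSeries.C (R := R2) (mono (0, 1))

lemma Qgf_neSwN_quadratic :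
    (X * 𝐱 * 𝐲 - X ^ 2 * 𝐱 ^ 2 * 𝐲 ^ 2 - X ^ 2 * 𝐱 * 𝐲 ^ 2 - X ^ 2) * Qgf neSwN ^ 2
      + (1 - 2 * X * 𝐱 * 𝐲 - X * 𝐲) * Qgf neSwN - 1 = 0 := by
  have hxy : C (mono (1, 1)) = 𝐱 * 𝐲 := by rw [← map_mul, ← mono_add]; rfl
  have hinv : C (mono (-1, -1)) * (𝐱 * 𝐲) = 1 := by
    rw [← hxy, ← map_mul, ← mono_add]; exact map_one C
  have hK := Qgf_neSwN_kernel_eq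
  have hL := Qgf_neSwN_last_visit_eq
  rw [map_add, map_add, hxy] at hK
  rw [hxy] at hL
  linear_combination (1 + X * 𝐱 * 𝐲 * Qgf neSwN) * hK + X * C (mono (-1, -1)) * hL
    + X ^ 2 * Qgf neSwN ^ 2 * hinv

lemma constantCoeff_Qgf_neSwN : constantCoeff (Qgf neSwN) = 1 := by
  rw [← coeff_zero_eq_constantCoeff_apply, coeff_Qgf_neSwN, walkPoly_zero]

lemma Qgf_neSwN_closed_form {s : R2⟦X⟧} (hs : s ^ 2 = 1 - 2 * 𝐲 * X + X ^ 2 * 𝐲 ^ 2 - 4 * X ^ 2)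
    (hs0 : constantCoeff s = 1) :
    X * (2 * X - 𝐲 * 𝐱 + 𝐲 ^ 2 * 𝐱 * X + 𝐲 * 𝐱 * s) * Qgf neSwN = -(-1 + 𝐲 * X + s) := by
  have hsq : (s * (X * 𝐱 * 𝐲 * Qgf neSwN + 1)) ^ 2 =
      ((2 * X ^ 2 - X * 𝐱 * 𝐲 + X ^ 2 * 𝐱 * 𝐲 ^ 2) * Qgf neSwN - 1 + 𝐲 * X) ^ 2 := by
    linear_combination (X * 𝐱 * 𝐲 * Qgf neSwN + 1) ^ 2 * hs + 4 * X ^ 2 * Qgf_neSwN_quadratic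
  rcases sq_eq_sq_iff_eq_or_eq_neg.1 hsq with h | h
  · have h0 := congrArg constantCoeff h
    simp only [map_mul, map_add, map_sub, map_pow, map_one, map_ofNat, hs0,
      constantCoeff_Qgf_neSwN, constantCoeff_X, constantCoeff_C] at h0
    have : (1 : ℚ) = -1 :=
      (algebraMap ℚ R2).injective (by rw [map_neg, map_one]; linear_combination h0)
    norm_num at this
  · linear_combination h

end NeSwN

end QuarterWalk

/-- For the step set `{NE, SW, N} = {(1,1),(-1,-1),(0,1)}` the complete
generating function `Q(x,y;t)` is algebraic over `ℚ(x,y,t)`; explicitly, with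
`s = √(1 - 2yt + t²y² - 4t²)` (the power series in `t` with `s² = 1-2yt+t²y²-4t²`
and constant term `1`),
`t·(2t - yx + y²xt + yx·s) · Q(x,y;t) = -(-1 + yt + s)`. -/
theorem Qgf_NE_SW_N_algebraic :
    (∃ P : Polynomial (MvPolynomial (Fin 3) ℚ), P ≠ 0 ∧
      Polynomial.eval₂
        (MvPolynomial.eval₂Hom ((PowerSeries.C (R := R2)).comp (algebraMap ℚ R2))
          (fun v : Fin 3 =>
            if v = 0 then PowerSeries.C (R := R2) (mono (1, 0))
            else if v = 1 then PowerSeries.C (R := R2) (mono (0, 1))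
            else PowerSeries.X))
        (Qgf {((1:ℤ),(1:ℤ)), (-1,-1), (0,1)}) P = 0) ∧
    (∀ s : PowerSeries R2,
      s ^ 2 = 1 - 2 * PowerSeries.C (R := R2) (mono (0, 1)) * PowerSeries.X
          + PowerSeries.X ^ 2 * PowerSeries.C (R := R2) (mono (0, 1)) ^ 2
          - 4 * PowerSeries.X ^ 2 →
      PowerSeries.constantCoeff (R := R2) s = 1 →
      PowerSeries.X *
          (2 * PowerSeries.X
            - PowerSeries.C (R := R2) (mono (0, 1)) * PowerSeries.C (R := R2) (mono (1, 0))
            + PowerSeries.C (R := R2) (mono (0, 1)) ^ 2 * PowerSeries.C (R := R2) (mono (1, 0)) *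
                PowerSeries.X
            + PowerSeries.C (R := R2) (mono (0, 1)) * PowerSeries.C (R := R2) (mono (1, 0)) * s) *
          Qgf {((1:ℤ),(1:ℤ)), (-1,-1), (0,1)} =
        -(-1 + PowerSeries.C (R := R2) (mono (0, 1)) * PowerSeries.X + s)) := by
  refine ⟨⟨Polynomial.C (MvPolynomial.X 2 * MvPolynomial.X 0 * MvPolynomial.X 1
        - MvPolynomial.X 2 ^ 2 * MvPolynomial.X 0 ^ 2 * MvPolynomial.X 1 ^ 2
        - MvPolynomial.X 2 ^ 2 * MvPolynomial.X 0 * MvPolynomial.X 1 ^ 2 - MvPolynomial.X 2 ^ 2)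
        * Polynomial.X ^ 2
      + Polynomial.C (1 - 2 * MvPolynomial.X 2 * MvPolynomial.X 0 * MvPolynomial.X 1
        - MvPolynomial.X 2 * MvPolynomial.X 1) * Polynomial.X - 1, ?_, ?_⟩,
    fun s hs hs0 => QuarterWalk.Qgf_neSwN_closed_form hs hs0⟩
  · intro hP
    have := congrArg (Polynomial.coeff · 0) hP
    simp at this
  · simp [Polynomial.eval₂_pow]
    linear_combination QuarterWalk.Qgf_neSwN_quadratic
end

section
/- For the step set {NE, SE, NW} = {(1,1),(1,-1),(-1,1)}, the two kernel roots Y_{±1}(x) = (x/(2t(1+x²)))·(1 ∓ √(1 - 4t²(1+x²))), viewed as algebraic functions/formal series, satisfy Y_{+1}(Y_{-1}(x)) = x and Y_{-1}(Y_{+1}(x)) = x. -/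
open PowerSeries

/-- The field `K = ℚ((t))` of formal Laurent series in `t`. -/
abbrev K := LaurentSeries ℚ

/-- The element `t` of `ℚ((t))`. -/
noncomputable def tt : K := HahnSeries.single 1 1

/-- Composition of formal power series (in the variable `x`, with coefficients
in a commutative ring): `(f ∘ g)`, the substitution of `g` into `f`.  When `g`
has zero constant term, the coefficient of `xⁿ` in `f(g(x))` is the finite sum
`∑_{k ≤ n} f_k · [xⁿ](g^k)`. -/
noncomputable def pscomp {R : Type*} [CommRing R] (f g : PowerSeries R) : PowerSeries R :=
  PowerSeries.mk fun n =>
    ∑ k ∈ Finset.range (n + 1), PowerSeries.coeff k f * PowerSeries.coeff n (g ^ k)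

/-!
Both roots `Y = Y₊₁` and `Z = Y₋₁` satisfy the kernel equation `K(x, y) = 0`, and `K` is
symmetric. Substituting `x ↦ Y` into `K(x, Z(x)) = 0` gives `K(Y, Z ∘ Y) = 0`, while
`K(Y, x) = 0` by symmetry; hence `Z ∘ Y` and `x` are two roots of the same quadratic, and
`(Z ∘ Y - x) · (Y - t(1 + Y²)(Z ∘ Y + x)) = 0` in the domain `ℚ((t))⟦x⟧`. The second factor
has a nonzero coefficient of `x`: writing `Y = a x + …`, `Z = b x + …` one finds `ab = 1`, and
`a = 2t` would force `4t² = 1`. The other composition follows by exchanging `s` with `-s`.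
-/

section Composition

variable {R : Type*} [CommRing R]

theorem pscomp_eq_subst {g : R⟦X⟧} (hg : constantCoeff g = 0) (f : R⟦X⟧) :
    pscomp f g = f.subst g := by
  ext n
  rw [pscomp, coeff_mk, coeff_subst' (HasSubst.of_constantCoeff_zero' hg),
    finsum_eq_sum_of_support_subset _ (s := Finset.range (n + 1))]
  · simp only [smul_eq_mul]
  · intro k hk
    by_contra hkn
    refine hk (smul_eq_zero_of_right _ (coeff_of_lt_order _ ?_))
    calc (n : ℕ∞) < k := by simpa using hkn
      _ ≤ (g ^ k).order := le_order_pow_of_constantCoeff_eq_zero k hg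

@[simp]
theorem zero_pscomp (g : R⟦X⟧) : pscomp 0 g = 0 := by
  ext n
  simp [pscomp]

@[simp]
theorem constantCoeff_pscomp (f g : R⟦X⟧) : constantCoeff (pscomp f g) = constantCoeff f := by
  rw [← coeff_zero_eq_constantCoeff_apply, pscomp, coeff_mk]
  simp

@[simp]
theorem coeff_one_pscomp (f g : R⟦X⟧) : coeff 1 (pscomp f g) = coeff 1 f * coeff 1 g := by
  simp [pscomp, Finset.sum_range_succ, coeff_one]

theorem constantCoeff_eq_zero_of_mul_eq_X_mul [IsDomain R] {u f g : R⟦X⟧}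
    (hu : constantCoeff u ≠ 0) (h : u * f = X * g) : constantCoeff f = 0 := by
  have := congrArg constantCoeff h
  simp only [map_mul, constantCoeff_X, zero_mul] at this
  exact (mul_eq_zero.1 this).resolve_left hu

end Composition

section Kernel

/-- The kernel `xy - t x²y² - t x² - t y²` of the step set `{NE, SE, NW}`, with `t` written `c`. -/
def walkKernel {A : Type*} [CommRing A] (c x y : A) : A :=
  x * y - c * x ^ 2 * y ^ 2 - c * x ^ 2 - c * y ^ 2

variable {A : Type*} [CommRing A]

theorem walkKernel_comm (c x y : A) : walkKernel c x y = walkKernel c y x := by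
  unfold walkKernel
  ring

theorem walkKernel_sub_walkKernel (c x y w : A) :
    walkKernel c y w - walkKernel c y x = (w - x) * (y - c * (1 + y ^ 2) * (w + x)) := by
  unfold walkKernel
  ring

theorem walkKernel_eq_zero_of_mul_eq [IsDomain A] {c s x y : A} (hu : 2 * c * (1 + x ^ 2) ≠ 0)
    (hs : s ^ 2 = 1 - 4 * c ^ 2 * (1 + x ^ 2)) (hy : 2 * c * (1 + x ^ 2) * y = x * (1 - s)) :
    walkKernel c x y = 0 := by
  have h2 : (2 : A) ≠ 0 := left_ne_zero_of_mul (left_ne_zero_of_mul hu)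
  have h : 2 * c * (1 + x ^ 2) * 2 * walkKernel c x y = 0 := by
    unfold walkKernel
    linear_combination (-(2 * c * (1 + x ^ 2) * y) - x * (1 - s) + 2 * x) * hy - x ^ 2 * hs
  simpa [hu, h2] using h

theorem walkKernel_pscomp {g : A⟦X⟧} (hg : constantCoeff g = 0) (c : A) (f : A⟦X⟧) :
    pscomp (walkKernel (C c) X f) g = walkKernel (C c) g (pscomp f g) := by
  have hg' := HasSubst.of_constantCoeff_zero' hg
  have hC : subst g (C c) = C c := subst_C c
  simp only [pscomp_eq_subst hg, walkKernel, subst_sub hg', subst_mul hg', subst_pow hg',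
    subst_X hg', hC]

end Kernel

section Roots

variable {F : Type*} [Field F] {t : F}

/-- With `a`, `b` the coefficients of `x` in the two kernel roots and `s₀ = s(0)`, this says that
the coefficient of `x` in the second factor of `walkKernel_sub_walkKernel` does not vanish. -/
theorem kernel_linear_coeff_ne {a b s₀ : F} (h2 : (2 : F) ≠ 0) (ht : t ≠ 0)
    (hdisc : 1 - 4 * t ^ 2 ≠ 0) (hs₀ : s₀ ^ 2 = 1 - 4 * t ^ 2) (ha : 2 * t * a = 1 - s₀)
    (hb : 2 * t * b = 1 + s₀) : t * (b * a + 1) ≠ a := by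
  intro h
  have h4 : 4 * t ^ 2 ≠ 0 := by
    rw [show (4 : F) * t ^ 2 = (2 * t) ^ 2 by ring]
    exact pow_ne_zero 2 (mul_ne_zero h2 ht)
  have hba : b * a = 1 := by
    have : 4 * t ^ 2 * (b * a - 1) = 0 := by
      linear_combination 2 * t * b * ha + (1 - s₀) * hb - hs₀
    exact sub_eq_zero.1 ((mul_eq_zero.1 this).resolve_left h4)
  have hs₀' : s₀ = 1 - 4 * t ^ 2 := by linear_combination ha + 2 * t * h - 2 * t ^ 2 * hba
  have : s₀ * (s₀ - 1) = 0 := by linear_combination hs₀ - hs₀'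
  rcases mul_eq_zero.1 this with h0 | h1
  · exact hdisc (hs₀' ▸ h0)
  · exact h4 (by linear_combination hs₀' - h1)

variable (h2 : (2 : F) ≠ 0) (ht : t ≠ 0) (hdisc : 1 - 4 * t ^ 2 ≠ 0) {s Y Z : F⟦X⟧}
  (hs : s ^ 2 = 1 - 4 * C t ^ 2 * (1 + X ^ 2))
  (hY : 2 * C t * (1 + X ^ 2) * Y = X * (1 - s)) (hZ : 2 * C t * (1 + X ^ 2) * Z = X * (1 + s))
include h2 ht hdisc hs hY hZ

theorem spurious_factor_ne_zero (hY0 : constantCoeff Y = 0) (hZ0 : constantCoeff Z = 0) :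
    Y - C t * (1 + Y ^ 2) * (pscomp Z Y + X) ≠ 0 := by
  intro h
  refine kernel_linear_coeff_ne (a := coeff 1 Y) (b := coeff 1 Z) (s₀ := constantCoeff s)
    h2 ht hdisc ?_ ?_ ?_ ?_
  · simpa [map_ofNat] using congrArg constantCoeff hs
  · simpa [coeff_one_mul, hY0, map_ofNat, mul_comm] using congrArg (coeff 1) hY
  · simpa [coeff_one_mul, hZ0, map_ofNat, mul_comm] using congrArg (coeff 1) hZ
  · symm
    simpa [coeff_one_mul, coeff_one_pow, hY0, hZ0, sub_eq_zero, mul_comm] using congrArg (coeff 1) h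

theorem pscomp_eq_X_of_kernel_roots : pscomp Z Y = X := by
  have hu0 : constantCoeff (2 * C t * (1 + X ^ 2) : F⟦X⟧) ≠ 0 := by simp [map_ofNat, h2, ht]
  have hu : (2 * C t * (1 + X ^ 2) : F⟦X⟧) ≠ 0 := fun h => hu0 (by rw [h, map_zero])
  have hY0 := constantCoeff_eq_zero_of_mul_eq_X_mul hu0 hY
  have hZ0 := constantCoeff_eq_zero_of_mul_eq_X_mul hu0 hZ
  have hKY := walkKernel_eq_zero_of_mul_eq hu hs hY
  have hKZ : walkKernel (C t) X Z = 0 :=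
    walkKernel_eq_zero_of_mul_eq (s := -s) hu (by rw [neg_sq, hs]) (by rw [hZ, sub_neg_eq_add])
  have hKW : walkKernel (C t) Y (pscomp Z Y) = 0 := by
    rw [← walkKernel_pscomp hY0, hKZ, zero_pscomp]
  have hfac := walkKernel_sub_walkKernel (C t) X Y (pscomp Z Y)
  rw [hKW, walkKernel_comm, hKY, sub_zero, eq_comm, mul_eq_zero] at hfac
  exact sub_eq_zero.1 (hfac.resolve_right (spurious_factor_ne_zero h2 ht hdisc hs hY hZ hY0 hZ0))

end Roots

theorem one_sub_four_mul_tt_sq_ne_zero : (1 : K) - 4 * tt ^ 2 ≠ 0 := by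
  have h4 : (4 : K) * tt ^ 2 = HahnSeries.single 2 4 := by
    rw [← map_ofNat HahnSeries.C 4, HahnSeries.C_apply, tt, HahnSeries.single_pow,
      HahnSeries.single_mul_single]
    norm_num
  intro h
  simpa [h4] using congrArg (HahnSeries.coeff · 0) h

/-- For the step set `{NE, SE, NW} = {(1,1),(1,-1),(-1,1)}` the two
kernel roots `Y₊₁(x) = (x/(2t(1+x²)))(1 - √(1-4t²(1+x²)))` and
`Y₋₁(x) = (x/(2t(1+x²)))(1 + √(1-4t²(1+x²)))`, viewed as formal series in `x`
with coefficients in `ℚ((t))`, satisfy `Y₊₁(Y₋₁(x)) = x` and `Y₋₁(Y₊₁(x)) = x`,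
composition being formal series substitution.  (Here `s` is a square root of
`1 - 4t²(1+x²)` in `ℚ((t))⟦x⟧`, and `Y₊₁, Y₋₁` are characterized by
`2t(1+x²)·Y₊₁ = x(1-s)` and `2t(1+x²)·Y₋₁ = x(1+s)`.) -/
theorem kernel_roots_inverse
    (s Yp Ym : PowerSeries K)
    (hs : s ^ 2 = 1 - 4 * PowerSeries.C (tt ^ 2) * (1 + PowerSeries.X ^ 2))
    (hYp : 2 * PowerSeries.C tt * (1 + PowerSeries.X ^ 2) * Yp
        = PowerSeries.X * (1 - s))
    (hYm : 2 * PowerSeries.C tt * (1 + PowerSeries.X ^ 2) * Ym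
        = PowerSeries.X * (1 + s)) :
    pscomp Yp Ym = PowerSeries.X ∧ pscomp Ym Yp = PowerSeries.X := by
  have : CharZero K := algebraRat.charZero K
  have ht : tt ≠ 0 := HahnSeries.single_ne_zero one_ne_zero
  rw [map_pow] at hs
  exact ⟨pscomp_eq_X_of_kernel_roots two_ne_zero ht one_sub_four_mul_tt_sq_ne_zero
      (by rw [neg_sq, hs]) (by rw [hYm, sub_neg_eq_add]) (by rw [hYp, sub_eq_add_neg]),
    pscomp_eq_X_of_kernel_roots two_ne_zero ht one_sub_four_mul_tt_sq_ne_zero hs hYp hYm⟩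
end
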